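/- arXiv:1707.06590 — 2 statements merged into one kernel-verified Lean document; each statement's English description precedes it below -/
import Mathlib

section
/- The numbers q_{ij} satisfy: q_{i0} = binom(2i, i) for all i ≥ 0; q_{i1} = (1/2)·binom(2i, i) for all i ≥ 1; and q_{ij} = −q_{i−1,j−2} + q_{i,j−1} for all i ≥ 1 and j ≥ 2. -/
open PowerSeries Finset

/-- The generating function of the Catalan numbers. -/
noncomputable def catalanGF : PowerSeries ℝ :=
  PowerSeries.mk fun n => (catalan n : ℝ)

/-- The generating function `W(x) = ∑ binom(2n,n) xⁿ` of the central binomial coefficients. -/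
noncomputable def centralBinomGF : PowerSeries ℝ :=
  PowerSeries.mk fun n => ((2 * n).choose n : ℝ)

/-- `q i j` is the coefficient of `x^i` in `W(x)·(xC(x))^j`, i.e. the `(i,j)` entry of
`D(𝕃^S)⁻¹D`. -/
noncomputable def qEntry (i j : ℕ) : ℝ :=
  PowerSeries.coeff i (centralBinomGF * (PowerSeries.X * catalanGF) ^ j)

/-!
With `F = x C(x)`, the Catalan equation `C = 1 + x C²` reads `F = x + F²`, and `W = F'` because
`(n + 1) Cₙ = binom(2n, n)`. Differentiating `F = x + F²` gives `W = 1 + 2 F W`, which is the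
formula for the column `j = 1`, while multiplying `F² = F - x` by `W F^k` gives the recurrence.
-/

lemma catalanGF_eq_map_catalanSeries :
    catalanGF = PowerSeries.map (Nat.castRingHom ℝ) catalanSeries := by
  ext n
  simp [catalanGF, catalanSeries]

lemma X_mul_catalanGF_eq_X_add_sq :
    X * catalanGF = X + (X * catalanGF) ^ 2 := by
  have h := congrArg (PowerSeries.map (Nat.castRingHom ℝ)) catalanSeries_sq_mul_X_add_one
  simp only [map_add, map_mul, map_pow, map_X, map_one, ← catalanGF_eq_map_catalanSeries] at h
  linear_combination X * h.symm

lemma centralBinomGF_eq_derivative : centralBinomGF = d⁄dX ℝ (X * catalanGF) := by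
  ext n
  rw [coeff_derivative, coeff_succ_X_mul]
  simp only [centralBinomGF, catalanGF, coeff_mk]
  rw [← Nat.centralBinom, ← succ_mul_catalan_eq_centralBinom]
  push_cast
  ring

lemma centralBinomGF_eq_one_add : centralBinomGF = 1 + 2 * (X * catalanGF) * centralBinomGF := by
  conv_lhs => rw [centralBinomGF_eq_derivative, X_mul_catalanGF_eq_X_add_sq]
  rw [map_add, derivative_X, sq, Derivation.leibniz, smul_eq_mul, ← centralBinomGF_eq_derivative]
  ring

lemma coeff_succ_mul_X_mul_catalanGF_pow_add_two (G : PowerSeries ℝ) (i k : ℕ) :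
    coeff (i + 1) (G * (X * catalanGF) ^ (k + 2)) =
      -coeff i (G * (X * catalanGF) ^ k) + coeff (i + 1) (G * (X * catalanGF) ^ (k + 1)) := by
  have h : G * (X * catalanGF) ^ (k + 2) =
      G * (X * catalanGF) ^ (k + 1) - X * (G * (X * catalanGF) ^ k) := by
    linear_combination -G * (X * catalanGF) ^ k * X_mul_catalanGF_eq_X_add_sq
  rw [h, map_sub, coeff_succ_X_mul]
  ring

lemma qEntry_zero (i : ℕ) : qEntry i 0 = (2 * i).choose i := by
  simp [qEntry, centralBinomGF]

lemma qEntry_one {i : ℕ} (hi : i ≠ 0) : qEntry i 1 = 1 / 2 * (2 * i).choose i := by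
  have h : C (2 : ℝ) * (centralBinomGF * (X * catalanGF) ^ 1) = centralBinomGF - 1 := by
    rw [map_ofNat]
    linear_combination -centralBinomGF_eq_one_add
  have h_coeff := congrArg (coeff i) h
  rw [coeff_C_mul, map_sub, coeff_one, if_neg hi, ← qEntry, centralBinomGF, coeff_mk] at h_coeff
  linarith

lemma qEntry_succ_add_two (i k : ℕ) :
    qEntry (i + 1) (k + 2) = -qEntry i k + qEntry (i + 1) (k + 1) :=
  coeff_succ_mul_X_mul_catalanGF_pow_add_two centralBinomGF i k

/-- Recurrence relations for the entries of `D(𝕃^S)⁻¹D`: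
`qᵢ₀ = binom(2i,i)` for all `i`, `qᵢ₁ = (1/2)·binom(2i,i)` for `i ≥ 1`, and
`q_{ij} = −q_{i−1,j−2} + q_{i,j−1}` for `i ≥ 1`, `j ≥ 2`. -/
theorem stmt_5 :
    (∀ i : ℕ, qEntry i 0 = ((2 * i).choose i : ℝ)) ∧
    (∀ i : ℕ, 1 ≤ i → qEntry i 1 = (1 / 2 : ℝ) * ((2 * i).choose i : ℝ)) ∧
    (∀ i j : ℕ, 1 ≤ i → 2 ≤ j →
      qEntry i j = -qEntry (i - 1) (j - 2) + qEntry i (j - 1)) := by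
  refine ⟨qEntry_zero, fun i hi => qEntry_one (by omega), fun i j hi hj => ?_⟩
  obtain ⟨i, rfl⟩ : ∃ i', i = i' + 1 := ⟨i - 1, by omega⟩
  obtain ⟨k, rfl⟩ : ∃ k, j = k + 2 := ⟨j - 2, by omega⟩
  exact qEntry_succ_add_two i k
end

section
/- For all natural numbers n and j with j ≥ 1: if n ≥ j then r_{nj} = ∑_{k=0}^{⌊(j−1)/2⌋} (−1)^k · binom(j−1−k, k) · C_{n−1−k}, and if n < j then r_{nj} = 0. (In particular each entry of D(𝔽^S)⁻¹D is an alternating linear combination of Catalan numbers whose coefficients binom(j−1−k,k) sum to the Fibonacci number F_j.) -/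
open PowerSeries Finset

/-- `r i j` is the coefficient of `x^i` in `(xC(x))^j`, i.e. the `(i,j)` entry of
`D(𝔽^S)⁻¹D`. -/
noncomputable def rEntry (i j : ℕ) : ℝ :=
  PowerSeries.coeff i ((PowerSeries.X * catalanGF) ^ j)

section
variable {A : Type*} [CommRing A]

def altFib (t : A) : ℕ → A
  | 0 => 0
  | 1 => 1
  | n + 2 => altFib t (n + 1) - t * altFib t n

theorem altFib_succ_eq_sum_antidiagonal (t : A) :
    ∀ n, altFib t (n + 1) = ∑ p ∈ antidiagonal n, (-1) ^ p.1 * (p.2.choose p.1 : A) * t ^ p.1 :=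
  Nat.twoStepInduction (by simp [altFib]) (by simp [altFib, Nat.antidiagonal_succ]) fun n h1 h2 => by
    rw [altFib, h1, h2, Nat.sum_antidiagonal_succ, Nat.sum_antidiagonal_succ,
      Nat.sum_antidiagonal_succ']
    simp only [Nat.choose_succ_succ, Nat.cast_add, mul_add, add_mul, sum_add_distrib, mul_sum]
    simp [pow_succ, mul_comm t, mul_assoc]
    ring

theorem altFib_succ_eq_sum_range (t : A) (n : ℕ) :
    altFib t (n + 1) = ∑ k ∈ range (n / 2 + 1), (-1) ^ k * ((n - k).choose k : A) * t ^ k := by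
  rw [altFib_succ_eq_sum_antidiagonal, Nat.sum_antidiagonal_eq_sum_range_succ
    (fun k l => (-1) ^ k * (l.choose k : A) * t ^ k)]
  refine (sum_subset (range_subset_range.2 (by omega)) fun k hk hk' => ?_).symm
  simp only [mem_range] at hk hk'
  rw [Nat.choose_eq_zero_of_lt (by omega), Nat.cast_zero, mul_zero, zero_mul]

theorem pow_succ_eq_altFib {u t : A} (hu : u ^ 2 = u - t) (n : ℕ) :
    u ^ (n + 1) = altFib t (n + 1) * u - t * altFib t n := by
  induction n with
  | zero => simp [altFib]
  | succ n ih =>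
    rw [pow_succ, ih, altFib]
    linear_combination altFib t (n + 1) * hu
end

section
variable {R : Type*} [CommRing R]

theorem coeff_altFib_X_mul (f : R⟦X⟧) {i n : ℕ} (h : i ≤ n) :
    coeff n (altFib X (i + 1) * f) =
      ∑ k ∈ range (i / 2 + 1), (-1) ^ k * ((i - k).choose k : R) * coeff (n - k) f := by
  rw [altFib_succ_eq_sum_range, sum_mul, map_sum]
  refine sum_congr rfl fun k hk => ?_
  rw [mem_range] at hk
  have hC : ((-1) ^ k * ((i - k).choose k : R⟦X⟧)) = C ((-1) ^ k * ((i - k).choose k : R)) := by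
    simp
  rw [mul_assoc, hC, coeff_C_mul, coeff_X_pow_mul', if_pos (by omega)]

theorem coeff_altFib_X_eq_zero {i n : ℕ} (h : i ≤ n) : coeff n (altFib (X : R⟦X⟧) i) = 0 := by
  cases i with
  | zero => simp [altFib]
  | succ i =>
    rw [← mul_one (altFib _ _), coeff_altFib_X_mul 1 (by omega)]
    refine sum_eq_zero fun k hk => ?_
    rw [mem_range] at hk
    rw [coeff_one, if_neg (by omega), mul_zero]
end

theorem catalanGF_eq_map : catalanGF = map (Nat.castRingHom ℝ) catalanSeries := by
  ext n; simp [catalanGF]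

theorem X_mul_catalanGF_sq : (X * catalanGF) ^ 2 = X * catalanGF - X := by
  have h := congrArg (map (Nat.castRingHom ℝ)) catalanSeries_sq_mul_X_add_one
  simp only [map_add, map_mul, map_pow, map_X, map_one] at h
  rw [← catalanGF_eq_map] at h
  linear_combination X * h

theorem coeff_succ_X_mul_catalanGF (m : ℕ) : coeff (m + 1) (X * catalanGF) = (catalan m : ℝ) := by
  simp [catalanGF]

theorem rEntry_succ_eq_sum {n i : ℕ} (h : i < n) :
    rEntry n (i + 1) =
      ∑ k ∈ range (i / 2 + 1), (-1 : ℝ) ^ k * ((i - k).choose k : ℝ) * (catalan (n - 1 - k) : ℝ) := by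
  obtain ⟨m, rfl⟩ : ∃ m, n = m + 1 := ⟨n - 1, by omega⟩
  rw [rEntry, pow_succ_eq_altFib X_mul_catalanGF_sq, map_sub, coeff_succ_X_mul,
    coeff_altFib_X_eq_zero (by omega), sub_zero, coeff_altFib_X_mul _ h.le]
  refine sum_congr rfl fun k hk => ?_
  rw [mem_range] at hk
  rw [show m + 1 - k = m - k + 1 by omega, coeff_succ_X_mul_catalanGF, Nat.add_sub_cancel]

theorem rEntry_eq_zero {n j : ℕ} (h : n < j) : rEntry n j = 0 := by
  rw [rEntry, mul_pow, coeff_X_pow_mul', if_neg (by omega)]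

/-- For `j ≥ 1`: if `n ≥ j` then
`r_{nj} = ∑_{k=0}^{⌊(j−1)/2⌋} (−1)^k · binom(j−1−k,k) · C_{n−1−k}`,
and if `n < j` then `r_{nj} = 0`. -/
theorem stmt_9 (n j : ℕ) (hj : 1 ≤ j) :
    (j ≤ n →
      rEntry n j =
        ∑ k ∈ Finset.range ((j - 1) / 2 + 1),
          (-1 : ℝ) ^ k * ((j - 1 - k).choose k : ℝ) * (catalan (n - 1 - k) : ℝ)) ∧
    (n < j → rEntry n j = 0) := by
  obtain ⟨i, rfl⟩ : ∃ i, j = i + 1 := ⟨j - 1, by omega⟩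
  exact ⟨fun h => rEntry_succ_eq_sum h, rEntry_eq_zero⟩
end
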